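/- Let W > 0, s > 0 and 0 < R_U ≤ R_X ≤ R_D with R_U < R_D, and let C₁, …, C_n be i.i.d. link capacities, each distributed as W·log₂(1 + s·X) with X exponential of rate 1. Then for all nonnegative integers a, b, b̃ with a + b ≤ n and b̃ ≤ b, the probability that exactly a of the capacities satisfy C_i ≥ R_D, exactly b of them satisfy R_U ≤ C_i < R_D, and exactly b̃ of them satisfy R_X ≤ C_i < R_D, equals B(n, a, p(R_D)) · B(n−a, b, p(R_U)/p(R_D)) · B(b, b̃, (p(R_X) − p(R_U))/(p(R_D) − p(R_U))). -/

import Mathlib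

open MeasureTheory ProbabilityTheory

/-- The link outage probability `p(R) = P(C < R)` for capacity
`C = W·log₂(1 + snr·X)` with `X` exponential of rate 1. -/
noncomputable def outageProb (W snr R : ℝ) : ℝ :=
  1 - Real.exp (-(((2 : ℝ) ^ (R / W) - 1) / snr))

/-- `B(N,M,q) = C(N,M)·(1−q)^M·q^{N−M}`. -/
noncomputable def binProb (N M : ℕ) (q : ℝ) : ℝ :=
  (N.choose M : ℝ) * (1 - q) ^ M * q ^ (N - M)

/-!
Sort every link into one of four classes according to which of the rates `R_U ≤ R_X ≤ R_D` its
capacity reaches: `A`, the links in outage at `R_U`, `B̃` and `B \ B̃`. Since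
`W·log₂(1 + snr·X) < R` exactly when `X < (2^{R/W} - 1)/snr`, the exponential tail of the gain
gives these classes the probabilities `1 - p(R_D)`, `p(R_U)`, `p(R_D) - p(R_X)` and
`p(R_X) - p(R_U)`. The links are independent, so the four class sizes are multinomially
distributed, and the multinomial probability is the product of the three nested binomial terms.
-/

open Finset Filter Topology

noncomputable def linkCapacity (W snr x : ℝ) : ℝ := W * Real.logb 2 (1 + snr * x)

noncomputable def gainThreshold (W snr R : ℝ) : ℝ := ((2 : ℝ) ^ (R / W) - 1) / snr

section Link

variable {W snr : ℝ}

theorem outageProb_eq_one_sub_exp (W snr R : ℝ) :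
    outageProb W snr R = 1 - Real.exp (-gainThreshold W snr R) := rfl

theorem gainThreshold_zero (W snr : ℝ) : gainThreshold W snr 0 = 0 := by
  simp [gainThreshold]

theorem gainThreshold_strictMono (hW : 0 < W) (hsnr : 0 < snr) :
    StrictMono (gainThreshold W snr) := by
  intro R R' h
  unfold gainThreshold
  gcongr
  exact Real.rpow_lt_rpow_of_exponent_lt one_lt_two (div_lt_div_of_pos_right h hW)

theorem outageProb_zero (W snr : ℝ) : outageProb W snr 0 = 0 := by
  simp [outageProb_eq_one_sub_exp, gainThreshold_zero]

theorem outageProb_strictMono (hW : 0 < W) (hsnr : 0 < snr) : StrictMono (outageProb W snr) :=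
  fun _ _ h ↦ by simpa [outageProb_eq_one_sub_exp] using gainThreshold_strictMono hW hsnr h

theorem outageProb_le_one (W snr R : ℝ) : outageProb W snr R ≤ 1 := by
  simp [outageProb_eq_one_sub_exp, Real.exp_nonneg]

theorem measurable_linkCapacity (W snr : ℝ) : Measurable (linkCapacity W snr) := by
  unfold linkCapacity Real.logb
  fun_prop

theorem linkCapacity_lt_iff (hW : 0 < W) (hsnr : 0 < snr) {t : ℝ} (ht : 0 ≤ t) (R : ℝ) :
    linkCapacity W snr t < R ↔ t < gainThreshold W snr R := by
  rw [linkCapacity, ← lt_div_iff₀' hW, Real.logb_lt_iff_lt_rpow one_lt_two (by positivity),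
    gainThreshold, lt_div_iff₀ hsnr]
  constructor <;> intro h <;> linarith

end Link

section ExponentialTail

variable {Ω : Type*} [MeasurableSpace Ω] {μ : Measure Ω} {f : Ω → ℝ}

theorem measure_le_eq_exp_neg (hf : Measurable f)
    (h : ∀ x : ℝ, 0 ≤ x → μ {ω | f ω > x} = ENNReal.ofReal (Real.exp (-x)))
    {x : ℝ} (hx : 0 < x) : μ {ω | x ≤ f ω} = ENNReal.ofReal (Real.exp (-x)) := by
  have hinter : ⋂ t > 0, {ω | x - t < f ω} = {ω | x ≤ f ω} := by
    ext ω
    simp only [Set.mem_iInter, Set.mem_ofPred_eq, sub_lt_iff_lt_add]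
    exact le_iff_forall_pos_lt_add.symm
  have hlim := tendsto_measure_biInter_gt (μ := μ) (s := fun t ↦ {ω | x - t < f ω}) (a := 0)
    (fun _ _ ↦ (measurableSet_lt measurable_const hf).nullMeasurableSet)
    (fun _ _ _ hij ω hω ↦ by simp only [Set.mem_ofPred_eq] at hω ⊢; linarith)
    ⟨x, hx, by simpa using (h 0 le_rfl).trans_ne ENNReal.ofReal_ne_top⟩
  rw [hinter] at hlim
  have hexp : Tendsto (fun t ↦ ENNReal.ofReal (Real.exp (-(x - t)))) (𝓝[>] 0)
      (𝓝 (ENNReal.ofReal (Real.exp (-x)))) :=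
    ((ENNReal.continuous_ofReal.comp (by fun_prop)).tendsto' (0 : ℝ) _
      (by simp)).mono_left nhdsWithin_le_nhds
  refine tendsto_nhds_unique hlim (hexp.congr' ?_)
  filter_upwards [Ioo_mem_nhdsGT hx] with t ht
  exact (h (x - t) (by linarith [ht.2])).symm

variable [IsProbabilityMeasure μ]

theorem measure_lt_eq_one_sub_exp_neg (hf : Measurable f)
    (h : ∀ x : ℝ, 0 ≤ x → μ {ω | f ω > x} = ENNReal.ofReal (Real.exp (-x)))
    {x : ℝ} (hx : 0 < x) : μ {ω | f ω < x} = ENNReal.ofReal (1 - Real.exp (-x)) := by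
  have hcompl : {ω | f ω < x} = {ω | x ≤ f ω}ᶜ := by ext; simp
  rw [hcompl, prob_compl_eq_one_sub (measurableSet_le measurable_const hf),
    measure_le_eq_exp_neg hf h hx, ENNReal.ofReal_sub _ (Real.exp_nonneg _), ENNReal.ofReal_one]

theorem measure_linkCapacity_lt {W snr : ℝ} (hW : 0 < W) (hsnr : 0 < snr) (hf : Measurable f)
    (h : ∀ x : ℝ, 0 ≤ x → μ {ω | f ω > x} = ENNReal.ofReal (Real.exp (-x)))
    {R : ℝ} (hR : 0 < R) :
    μ {ω | linkCapacity W snr (f ω) < R} = ENNReal.ofReal (outageProb W snr R) := by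
  -- `Real.logb` takes junk values at nonpositive arguments; the gain is positive almost surely.
  have hpos : ∀ᵐ ω ∂μ, 0 < f ω := by
    rw [ae_iff_measure_eq (measurableSet_lt measurable_const hf).nullMeasurableSet, measure_univ]
    simpa using h 0 le_rfl
  have hthreshold : 0 < gainThreshold W snr R := by
    simpa [gainThreshold_zero] using gainThreshold_strictMono hW hsnr hR
  rw [outageProb_eq_one_sub_exp, ← measure_lt_eq_one_sub_exp_neg hf h hthreshold]
  refine measure_congr (eventuallyEq_set.2 ?_)
  filter_upwards [hpos] with ω hω
  exact linkCapacity_lt_iff hW hsnr hω.le R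

end ExponentialTail

open MvPolynomial in
-- Both sides are the coefficient of `∏ k, X k ^ d k` in `(∑ k, p k • X k) ^ card ι`: on the
-- left after expanding the power as a product over `ι`, on the right by the multinomial theorem.
theorem sum_prod_of_card_fibers_eq_multinomial {ι κ R : Type*} [Fintype ι] [DecidableEq ι]
    [Fintype κ] [DecidableEq κ] [CommSemiring R] (p : κ → R) (d : κ → ℕ)
    (hd : ∑ k, d k = Fintype.card ι) :
    ∑ f : ι → κ with ∀ k, #{i | f i = k} = d k, ∏ i, p (f i) =
      Nat.multinomial univ d * ∏ k, p k ^ d k := by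
  set D : κ →₀ ℕ := Finsupp.equivFunOnFinite.symm d
  have hexpand : (∑ k, p k • X k : MvPolynomial κ R) ^ Fintype.card ι =
      ∑ f : ι → κ, monomial (∑ i, Finsupp.single (f i) 1) (∏ i, p (f i)) := by
    rw [← card_univ, ← prod_const, prod_univ_sum, Fintype.piFinset_univ]
    simp only [X, smul_monomial, smul_eq_mul, mul_one, monomial_sum_prod]
  have hfiber (f : ι → κ) :
      ∑ i, Finsupp.single (f i) 1 = D ↔ ∀ k, #{i | f i = k} = d k := by
    simp [D, Finsupp.ext_iff, Finsupp.finsetSum_apply, Finsupp.single_apply, eq_comm]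
  have key := coeff_linearCombination_X_pow_of_fintype p D (Fintype.card ι)
  rw [hexpand, coeff_sum] at key
  simp only [coeff_monomial, hfiber, ← sum_filter] at key
  rw [key, Finsupp.sum_fintype _ _ (by simp), if_pos (by simpa [D] using hd),
    Finsupp.multinomial_eq_of_support_subset (subset_univ _), Finsupp.prod_fintype _ _ (by simp)]
  rfl

theorem ProbabilityTheory.iIndepFun.measure_card_fibers_eq_multinomial {Ω ι κ : Type*}
    [MeasurableSpace Ω] {μ : Measure Ω} [Fintype ι] [DecidableEq ι] [Fintype κ] [DecidableEq κ]
    [MeasurableSpace κ] [MeasurableSingletonClass κ] {Y : ι → Ω → κ}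
    (hY : ∀ i, Measurable (Y i)) (hind : iIndepFun Y μ) {p : κ → ℝ} (hp : ∀ k, 0 ≤ p k)
    (hYp : ∀ i k, μ {ω | Y i ω = k} = ENNReal.ofReal (p k)) {d : κ → ℕ}
    (hd : ∑ k, d k = Fintype.card ι) :
    μ {ω | ∀ k, #{i | Y i ω = k} = d k} =
      ENNReal.ofReal (Nat.multinomial univ d * ∏ k, p k ^ d k) := by
  have hatom (f : ι → κ) : (fun ω i ↦ Y i ω) ⁻¹' {f} = ⋂ i ∈ univ, Y i ⁻¹' {f i} := by
    ext; simp [funext_iff]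
  have hevent : {ω | ∀ k, #{i | Y i ω = k} = d k} =
      (fun ω i ↦ Y i ω) ⁻¹' ↑({f | ∀ k, #{i | f i = k} = d k} : Finset (ι → κ)) := by
    ext; simp
  rw [hevent, ← sum_measure_preimage_singleton _ fun f _ ↦
      hatom f ▸ measurableSet_biInter _ fun i _ ↦ hY i (measurableSet_singleton _),
    ← sum_prod_of_card_fibers_eq_multinomial p d hd,
    ENNReal.ofReal_sum_of_nonneg fun f _ ↦ prod_nonneg fun i _ ↦ hp _]
  refine sum_congr rfl fun f _ ↦ ?_
  rw [hatom, hind.measure_inter_preimage_eq_mul _ fun i _ ↦ measurableSet_singleton _,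
    ENNReal.ofReal_prod_of_nonneg fun i _ ↦ hp _]
  exact prod_congr rfl fun i _ ↦ hYp i (f i)

theorem Nat.multinomial_univ_four_eq_choose (a b c d : ℕ) :
    Nat.multinomial univ ![a, b, c, d] =
      (a + b + c + d).choose a * (b + c + d).choose b * (c + d).choose c := by
  rw [show (univ : Finset (Fin 4)) = {0, 1, 2, 3} by decide]
  simp [Nat.multinomial_insert, Nat.multinomial_singleton, add_assoc, mul_assoc]

theorem binProb_mul_binProb_mul_binProb_eq_multinomial {n a b bt : ℕ} (hab : a + b ≤ n)
    (hbt : bt ≤ b) {u x d : ℝ} (hd : d ≠ 0) (hdu : d ≠ u) :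
    binProb n a d * binProb (n - a) b (u / d) * binProb b bt ((x - u) / (d - u)) =
      Nat.multinomial univ ![a, n - a - b, bt, b - bt] *
        ((1 - d) ^ a * u ^ (n - a - b) * (d - x) ^ bt * (x - u) ^ (b - bt)) := by
  obtain ⟨c, rfl⟩ := Nat.exists_eq_add_of_le hbt
  obtain ⟨m, rfl⟩ := Nat.exists_eq_add_of_le hab
  have hdu' : d - u ≠ 0 := sub_ne_zero.2 hdu
  simp only [binProb, Nat.multinomial_univ_four_eq_choose, Nat.add_sub_cancel_left,
    show a + (bt + c) + m - a = bt + c + m by omega, show a + m + bt + c = a + (bt + c) + m by ring,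
    show m + bt + c = bt + c + m by ring, Nat.choose_symm_add, one_sub_div hd, one_sub_div hdu',
    div_pow]
  field_simp
  push_cast
  ring

/-- The classes `0, 1, 2, 3` are `A`, the links in outage at `R_U`, `B̃` and `B \ B̃`; in this
order the multinomial coefficient of the class sizes splits into the three binomial ones. -/
noncomputable def rateClass (R_U R_X R_D c : ℝ) : Fin 4 :=
  if R_D ≤ c then 0 else if c < R_U then 1 else if R_X ≤ c then 2 else 3

section RateClass

variable {R_U R_X R_D c : ℝ}

theorem measurable_rateClass (R_U R_X R_D : ℝ) : Measurable (rateClass R_U R_X R_D) :=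
  .ite measurableSet_Ici measurable_const <| .ite measurableSet_Iio measurable_const <|
    .ite measurableSet_Ici measurable_const measurable_const

theorem rateClass_eq_zero_iff : rateClass R_U R_X R_D c = 0 ↔ R_D ≤ c := by
  grind [rateClass]

theorem rateClass_eq_one_iff (hUD : R_U ≤ R_D) : rateClass R_U R_X R_D c = 1 ↔ c < R_U := by
  grind [rateClass]

theorem rateClass_eq_two_iff (hUX : R_U ≤ R_X) :
    rateClass R_U R_X R_D c = 2 ↔ R_X ≤ c ∧ c < R_D := by
  grind [rateClass]

theorem rateClass_eq_three_iff (hXD : R_X ≤ R_D) :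
    rateClass R_U R_X R_D c = 3 ↔ R_U ≤ c ∧ c < R_X := by
  grind [rateClass]

theorem le_and_lt_iff_rateClass_eq_two_or_three (hUX : R_U ≤ R_X) (hXD : R_X ≤ R_D) :
    R_U ≤ c ∧ c < R_D ↔ rateClass R_U R_X R_D c = 2 ∨ rateClass R_U R_X R_D c = 3 := by
  grind [rateClass]

theorem card_ABBtilde_eq_iff {ι : Type*} [Fintype ι] (c : ι → ℝ) (hUX : R_U ≤ R_X)
    (hXD : R_X ≤ R_D) {a b bt : ℕ} (hab : a + b ≤ Fintype.card ι) (hbt : bt ≤ b) :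
    (Nat.card {i // R_D ≤ c i} = a ∧ Nat.card {i // R_U ≤ c i ∧ c i < R_D} = b ∧
        Nat.card {i // R_X ≤ c i ∧ c i < R_D} = bt) ↔
      ∀ k, #{i | rateClass R_U R_X R_D (c i) = k} =
        ![a, Fintype.card ι - a - b, bt, b - bt] k := by
  have htotal : ∑ k, #{i | rateClass R_U R_X R_D (c i) = k} = Fintype.card ι :=
    (card_eq_sum_card_fiberwise fun i _ ↦ mem_univ (rateClass R_U R_X R_D (c i))).symm
  have hA : Nat.card {i // R_D ≤ c i} = #{i | rateClass R_U R_X R_D (c i) = 0} := by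
    simp only [Nat.card_eq_fintype_card, Fintype.card_subtype, rateClass_eq_zero_iff]
  have hBtilde : Nat.card {i // R_X ≤ c i ∧ c i < R_D} =
      #{i | rateClass R_U R_X R_D (c i) = 2} := by
    simp only [Nat.card_eq_fintype_card, Fintype.card_subtype, rateClass_eq_two_iff hUX]
  have hB : Nat.card {i // R_U ≤ c i ∧ c i < R_D} =
      #{i | rateClass R_U R_X R_D (c i) = 2} + #{i | rateClass R_U R_X R_D (c i) = 3} := by
    classical
    simp only [Nat.card_eq_fintype_card, Fintype.card_subtype,
      le_and_lt_iff_rateClass_eq_two_or_three hUX hXD]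
    rw [filter_or]
    exact card_union_of_disjoint (disjoint_filter.2 fun _ _ h2 h3 ↦ by rw [h2] at h3; cases h3)
  rw [hA, hB, hBtilde]
  simp only [Fin.sum_univ_four] at htotal
  simp [Fin.forall_fin_succ]
  omega

theorem measure_le_and_lt_eq_ofReal_sub {Ω : Type*} [MeasurableSpace Ω] {μ : Measure Ω}
    [IsFiniteMeasure μ] {C : Ω → ℝ} (hC : Measurable C) {r s p q : ℝ} (hrs : r ≤ s)
    (hr : μ {ω | C ω < r} = ENNReal.ofReal p) (hs : μ {ω | C ω < s} = ENNReal.ofReal q)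
    (hp : 0 ≤ p) : μ {ω | r ≤ C ω ∧ C ω < s} = ENNReal.ofReal (q - p) := by
  have hdiff : {ω | r ≤ C ω ∧ C ω < s} = {ω | C ω < s} \ {ω | C ω < r} := by
    ext; simp [and_comm]
  have hsub : {ω | C ω < r} ⊆ {ω | C ω < s} := fun _ h ↦ lt_of_lt_of_le h hrs
  rw [hdiff, measure_sdiff hsub (measurableSet_lt hC measurable_const).nullMeasurableSet
    (measure_ne_top _ _), hr, hs, ENNReal.ofReal_sub _ hp]

theorem measure_rateClass_eq {Ω : Type*} [MeasurableSpace Ω] {μ : Measure Ω}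
    [IsProbabilityMeasure μ] {C : Ω → ℝ} (hC : Measurable C) {pU pX pD : ℝ}
    (hUX : R_U ≤ R_X) (hXD : R_X ≤ R_D)
    (hU : μ {ω | C ω < R_U} = ENNReal.ofReal pU) (hX : μ {ω | C ω < R_X} = ENNReal.ofReal pX)
    (hD : μ {ω | C ω < R_D} = ENNReal.ofReal pD) (hpU : 0 ≤ pU) (hpX : 0 ≤ pX) (hpD : 0 ≤ pD)
    (k : Fin 4) :
    μ {ω | rateClass R_U R_X R_D (C ω) = k} =
      ENNReal.ofReal (![1 - pD, pU, pD - pX, pX - pU] k) := by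
  fin_cases k
  · have hcompl : {ω | R_D ≤ C ω} = {ω | C ω < R_D}ᶜ := by ext; simp
    simp only [Fin.zero_eta, rateClass_eq_zero_iff, hcompl,
      prob_compl_eq_one_sub (measurableSet_lt hC measurable_const), hD]
    rw [Matrix.cons_val_zero, ENNReal.ofReal_sub _ hpD, ENNReal.ofReal_one]
  · simpa [rateClass_eq_one_iff (hUX.trans hXD)] using hU
  · simpa [rateClass_eq_two_iff hUX] using measure_le_and_lt_eq_ofReal_sub hC hXD hX hD hpX
  · simpa [rateClass_eq_three_iff hXD] using measure_le_and_lt_eq_ofReal_sub hC hUX hU hX hpU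

end RateClass

/-- **Joint distribution of the sets `A`, `B` and `B̃` in the XOR-CoW analysis
(case `R_D > R_X ≥ R_U`).**
`C₁,…,C_n` are i.i.d. link capacities `W·log₂(1 + snr·X)`, `X` exponential of
rate 1, and `0 < R_U ≤ R_X ≤ R_D` with `R_U < R_D`.  For `a + b ≤ n` and
`b̃ ≤ b`, the probability that exactly `a` capacities satisfy `C_i ≥ R_D`,
exactly `b` satisfy `R_U ≤ C_i < R_D`, and exactly `b̃` satisfy
`R_X ≤ C_i < R_D`, equals
`B(n,a,p(R_D))·B(n−a,b,p(R_U)/p(R_D))·B(b,b̃,(p(R_X)−p(R_U))/(p(R_D)−p(R_U)))`. -/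
theorem xorCoW_ABBtilde_distribution {Ω : Type*} [MeasureSpace Ω]
    [IsProbabilityMeasure (ℙ : Measure Ω)]
    (n : ℕ) (W snr R_U R_X R_D : ℝ) (hW : 0 < W) (hsnr : 0 < snr)
    (hRU : 0 < R_U) (hUX : R_U ≤ R_X) (hXD : R_X ≤ R_D) (hUD : R_U < R_D)
    (X : Fin n → Ω → ℝ) (hXmeas : ∀ i, Measurable (X i))
    (hindep : iIndepFun X ℙ)
    (hXexp : ∀ i, ∀ x : ℝ, 0 ≤ x →
      ℙ {ω | X i ω > x} = ENNReal.ofReal (Real.exp (-x)))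
    (a b bt : ℕ) (hab : a + b ≤ n) (hbt : bt ≤ b) :
    ℙ {ω | Nat.card {i : Fin n // R_D ≤ W * Real.logb 2 (1 + snr * X i ω)} = a ∧
        Nat.card {i : Fin n // R_U ≤ W * Real.logb 2 (1 + snr * X i ω) ∧
          W * Real.logb 2 (1 + snr * X i ω) < R_D} = b ∧
        Nat.card {i : Fin n // R_X ≤ W * Real.logb 2 (1 + snr * X i ω) ∧
          W * Real.logb 2 (1 + snr * X i ω) < R_D} = bt} =
      ENNReal.ofReal (binProb n a (outageProb W snr R_D) *
        binProb (n - a) b (outageProb W snr R_U / outageProb W snr R_D) *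
        binProb b bt ((outageProb W snr R_X - outageProb W snr R_U) /
          (outageProb W snr R_D - outageProb W snr R_U))) := by
  have hp := outageProb_strictMono hW hsnr
  have hpU : 0 < outageProb W snr R_U := outageProb_zero W snr ▸ hp hRU
  have hpX := hp.monotone hUX
  have hpD := hp.monotone hXD
  have hRX : 0 < R_X := hRU.trans_le hUX
  have hRD : 0 < R_D := hRX.trans_le hXD
  have hclass (i : Fin n) :=
    measure_rateClass_eq ((measurable_linkCapacity W snr).comp (hXmeas i)) hUX hXD
      (measure_linkCapacity_lt hW hsnr (hXmeas i) (hXexp i) hRU)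
      (measure_linkCapacity_lt hW hsnr (hXmeas i) (hXexp i) hRX)
      (measure_linkCapacity_lt hW hsnr (hXmeas i) (hXexp i) hRD)
      hpU.le (by linarith) (by linarith)
  have hclass_nonneg (k : Fin 4) : 0 ≤ ![1 - outageProb W snr R_D, outageProb W snr R_U,
      outageProb W snr R_D - outageProb W snr R_X,
      outageProb W snr R_X - outageProb W snr R_U] k := by
    have := outageProb_le_one W snr R_D
    fin_cases k <;> simp <;> linarith
  have hg : Measurable (rateClass R_U R_X R_D ∘ linkCapacity W snr) :=
    (measurable_rateClass R_U R_X R_D).comp (measurable_linkCapacity W snr)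
  calc _ = ℙ {ω | ∀ k, #{i | rateClass R_U R_X R_D (linkCapacity W snr (X i ω)) = k} =
        ![a, Fintype.card (Fin n) - a - b, bt, b - bt] k} :=
      congrArg _ <| Set.ext fun ω ↦ card_ABBtilde_eq_iff (fun i ↦ linkCapacity W snr (X i ω))
        hUX hXD (by simpa using hab) hbt
    _ = _ := (hindep.comp _ fun _ ↦ hg).measure_card_fibers_eq_multinomial
        (fun i ↦ hg.comp (hXmeas i)) hclass_nonneg hclass (by simp [Fin.sum_univ_four]; omega)
    _ = _ := by
      rw [binProb_mul_binProb_mul_binProb_eq_multinomial hab hbt (by linarith) (hp hUD).ne',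
        Fin.prod_univ_four]
      simp
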